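/- arXiv:1210.7580 — 2 statements merged into one kernel-verified Lean document; each statement's English description precedes it below -/
import Mathlib

section
/- Let 0 < σ < 1 and α = 2σ - 1 (so -1 < α < 1, α ≤ 0 meaning σ ≤ 1/2). For a nonnegative measurable function g on ℝ₊ and any t > 0, one has t^{-1} ∫_t^{2t} ( ∫_{u/2}^{2u} g(s)/|u-s|^{1-σ} ds )² du ≲ ∫₀^∞ g(s)² s^{α} ds, with implicit constant depending only on σ. -/
/-!
Write the inner integral as `∫ g(s) K(u,s) ds` with `K(u,s) = |u-s|^{σ-1}` on `u/2 < s ≤ 2u`.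
Cauchy–Schwarz with weight `K(u,·)` gives `(∫ g K ds)² ≤ (∫ K ds) (∫ g² K ds)`, and
`∫ K(u,s) ds ≲ t^σ` for `u ∈ (t, 2t]`. After Fubini, `∫_t^{2t} K(u,s) du ≲ t^σ`, and it vanishes
unless `t/2 < s ≤ 4t`. The resulting factor `t⁻¹ t^{2σ} = t^{2σ-1}` is comparable to `s^{2σ-1}`
on that range, since `|2σ-1| ≤ 1` and `s/t` is bounded above and below.
-/

open MeasureTheory Set Function intervalIntegral
open scoped ENNReal

theorem intervalIntegrable_abs_rpow {p : ℝ} (hp : -1 < p) (a b : ℝ) :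
    IntervalIntegrable (fun x => |x| ^ p) volume a b := by
  have h_nonneg : ∀ b, 0 ≤ b → IntervalIntegrable (fun x => |x| ^ p) volume 0 b := fun b hb =>
    (intervalIntegrable_rpow' hp).congr_ae <| by
      filter_upwards [ae_restrict_mem measurableSet_uIoc] with x hx
      rw [uIoc_of_le hb] at hx
      rw [abs_of_pos hx.1]
  have h_zero : ∀ b, IntervalIntegrable (fun x => |x| ^ p) volume 0 b := by
    intro b
    rcases le_total 0 b with hb | hb
    · exact h_nonneg b hb
    · simpa [abs_neg] using
        (IntervalIntegrable.iff_comp_neg (f := fun x => |x| ^ p) (a := 0) (b := -b) (by simp)).mp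
          (h_nonneg (-b) (by linarith))
  exact (h_zero a).symm.trans (h_zero b)

theorem integral_abs_rpow {p : ℝ} (hp : -1 < p) {R : ℝ} (hR : 0 ≤ R) :
    ∫ x in -R..R, |x| ^ p = 2 * (R ^ (p + 1) / (p + 1)) := by
  have h_right : ∫ x in (0 : ℝ)..R, |x| ^ p = R ^ (p + 1) / (p + 1) := by
    rw [integral_congr (g := fun x => x ^ p) fun x hx => by
        rw [uIcc_of_le hR] at hx; simp only [abs_of_nonneg hx.1],
      integral_rpow (Or.inl hp), Real.zero_rpow (by linarith), sub_zero]
  have h_left : ∫ x in -R..0, |x| ^ p = ∫ x in (0 : ℝ)..R, |x| ^ p := by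
    simpa [abs_neg] using (integral_comp_neg (fun x => |x| ^ p) (a := 0) (b := R)).symm
  rw [← integral_add_adjacent_intervals (b := 0) (intervalIntegrable_abs_rpow hp _ _)
    (intervalIntegrable_abs_rpow hp _ _), h_left, h_right, two_mul]

theorem setLIntegral_abs_sub_rpow_le {σ : ℝ} (hσ : 0 < σ) {c R : ℝ} (hR : 0 ≤ R) {S : Set ℝ}
    (hS : S ⊆ Ioc (c - R) (c + R)) :
    ∫⁻ x in S, ENNReal.ofReal (|x - c| ^ (σ - 1)) ≤ ENNReal.ofReal (2 * (R ^ σ / σ)) := by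
  have hp : -1 < σ - 1 := by linarith
  have h_int : IntervalIntegrable (fun x => |x - c| ^ (σ - 1)) volume (c - R) (c + R) := by
    simpa [← sub_eq_add_neg, add_comm] using
      (intervalIntegrable_abs_rpow hp (-R) R).comp_sub_right c
  calc ∫⁻ x in S, ENNReal.ofReal (|x - c| ^ (σ - 1))
      ≤ ∫⁻ x in Ioc (c - R) (c + R), ENNReal.ofReal (|x - c| ^ (σ - 1)) := lintegral_mono_set hS
    _ = ENNReal.ofReal (∫ x in (c - R)..(c + R), |x - c| ^ (σ - 1)) := by
      rw [integral_of_le (by linarith), ofReal_integral_eq_lintegral_ofReal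
        ((intervalIntegrable_iff_integrableOn_Ioc_of_le (by linarith)).1 h_int)
        (ae_of_all _ fun x => by positivity)]
    _ = ENNReal.ofReal (2 * (R ^ σ / σ)) := by
      rw [integral_comp_sub_right (fun x => |x| ^ (σ - 1)), sub_sub_cancel_left,
        add_sub_cancel_left, integral_abs_rpow hp hR, sub_add_cancel]

section Schur

variable {α β : Type*} [MeasurableSpace α] [MeasurableSpace β] {μ : Measure α} {ν : Measure β}

theorem sq_lintegral_mul_le_lintegral_mul_lintegral_sq_mul {f w : β → ℝ≥0∞}
    (hf : AEMeasurable f ν) (hw : AEMeasurable w ν) :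
    (∫⁻ s, f s * w s ∂ν) ^ 2 ≤ (∫⁻ s, w s ∂ν) * ∫⁻ s, f s ^ 2 * w s ∂ν := by
  set r : β → ℝ≥0∞ := fun s => w s ^ (1 / 2 : ℝ)
  have hr : AEMeasurable r ν := hw.pow_const _
  have hr_sq : ∀ s, r s ^ (2 : ℝ) = w s := fun s => by
    rw [← ENNReal.rpow_mul]; norm_num
  have h_sq : ∀ x : ℝ≥0∞, (x ^ (1 / 2 : ℝ)) ^ 2 = x := fun x => by
    rw [← ENNReal.rpow_natCast, ← ENNReal.rpow_mul]; norm_num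
  have h_holder := ENNReal.lintegral_mul_le_Lp_mul_Lq ν Real.HolderConjugate.two_two
    (hf.mul hr) hr
  have h_split : ∀ s, f s * w s = (f * r) s * r s := fun s => by
    rw [Pi.mul_apply, mul_assoc, ← ENNReal.rpow_add_of_nonneg _ _ (by norm_num) (by norm_num)]
    norm_num
  simp only [Pi.mul_apply, ENNReal.mul_rpow_of_nonneg _ _ zero_le_two, hr_sq] at h_holder h_split
  calc (∫⁻ s, f s * w s ∂ν) ^ 2
      ≤ ((∫⁻ s, f s ^ (2 : ℝ) * w s ∂ν) ^ (1 / 2 : ℝ) * (∫⁻ s, w s ∂ν) ^ (1 / 2 : ℝ)) ^ 2 := by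
        rw [lintegral_congr h_split]; gcongr
    _ = (∫⁻ s, w s ∂ν) * ∫⁻ s, f s ^ 2 * w s ∂ν := by
        rw [mul_pow, h_sq, h_sq, mul_comm]; norm_cast

theorem lintegral_sq_lintegral_mul_le [SFinite μ] [SFinite ν] {K : α → β → ℝ≥0∞}
    (hK : Measurable (uncurry K)) {g : β → ℝ≥0∞} (hg : Measurable g) {A : ℝ≥0∞}
    (hA : ∀ᵐ u ∂μ, ∫⁻ s, K u s ∂ν ≤ A) :
    ∫⁻ u, (∫⁻ s, g s * K u s ∂ν) ^ 2 ∂μ ≤ A * ∫⁻ s, g s ^ 2 * ∫⁻ u, K u s ∂μ ∂ν := by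
  have hgK : Measurable (uncurry fun u s => g s ^ 2 * K u s) :=
    ((hg.pow_const 2).comp measurable_snd).mul hK
  calc ∫⁻ u, (∫⁻ s, g s * K u s ∂ν) ^ 2 ∂μ
      ≤ ∫⁻ u, A * ∫⁻ s, g s ^ 2 * K u s ∂ν ∂μ := by
        refine lintegral_mono_ae (hA.mono fun u hu => ?_)
        calc (∫⁻ s, g s * K u s ∂ν) ^ 2
            ≤ (∫⁻ s, K u s ∂ν) * ∫⁻ s, g s ^ 2 * K u s ∂ν :=
              sq_lintegral_mul_le_lintegral_mul_lintegral_sq_mul hg.aemeasurable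
                (hK.of_uncurry_left).aemeasurable
          _ ≤ A * ∫⁻ s, g s ^ 2 * K u s ∂ν := by gcongr
    _ = A * ∫⁻ s, ∫⁻ u, g s ^ 2 * K u s ∂μ ∂ν := by
        rw [lintegral_const_mul _ hgK.lintegral_prod_right,
          lintegral_lintegral_swap hgK.aemeasurable]
    _ = A * ∫⁻ s, g s ^ 2 * ∫⁻ u, K u s ∂μ ∂ν := by
        simp_rw [lintegral_const_mul _ hK.of_uncurry_right]

end Schur

noncomputable def localSingularKernel (σ u s : ℝ) : ℝ≥0∞ :=
  (Ioc (u / 2) (2 * u)).indicator (fun s => ENNReal.ofReal (|u - s| ^ (σ - 1))) s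

theorem measurable_uncurry_localSingularKernel (σ : ℝ) :
    Measurable (uncurry (localSingularKernel σ)) := by
  have h_eq : uncurry (localSingularKernel σ) =
      {p : ℝ × ℝ | p.2 ∈ Ioc (p.1 / 2) (2 * p.1)}.indicator
        fun p => ENNReal.ofReal (|p.1 - p.2| ^ (σ - 1)) := by
    funext ⟨u, s⟩; rfl
  rw [h_eq]
  exact Measurable.indicator (by fun_prop) <| (measurableSet_lt (by fun_prop) measurable_snd).inter
    (measurableSet_le measurable_snd (by fun_prop))

/-- At `s = u` the left integrand is `g u / 0 = ⊤`, while `0 ^ (σ - 1) = 0` in `ℝ`;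
the integrands agree off this null set. -/
theorem setLIntegral_div_eq_lintegral_mul_localSingularKernel (σ : ℝ) (g : ℝ → ℝ≥0∞) (u : ℝ) :
    ∫⁻ s in Ioc (u / 2) (2 * u), g s / ENNReal.ofReal (|u - s| ^ (1 - σ)) =
      ∫⁻ s, g s * localSingularKernel σ u s := by
  simp_rw [localSingularKernel, ← indicator_mul_right, lintegral_indicator measurableSet_Ioc]
  refine lintegral_congr_ae (ae_restrict_of_ae ((Measure.ae_ne volume u).mono fun s hs => ?_))
  have h_pos : 0 < |u - s| := abs_pos.2 (sub_ne_zero.2 hs.symm)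
  dsimp only
  rw [div_eq_mul_inv, ← ENNReal.ofReal_inv_of_pos (by positivity), ← Real.rpow_neg h_pos.le,
    neg_sub]

section

variable {σ : ℝ}

theorem lintegral_localSingularKernel_le (hσ : 0 < σ) {t u : ℝ} (hu : u ∈ Ioc t (2 * t)) :
    ∫⁻ s, localSingularKernel σ u s ≤ ENNReal.ofReal (2 * ((4 * t) ^ σ / σ)) := by
  obtain ⟨htu, hut⟩ := hu
  simp_rw [localSingularKernel, lintegral_indicator measurableSet_Ioc, abs_sub_comm u]
  exact setLIntegral_abs_sub_rpow_le hσ (by linarith) (Ioc_subset_Ioc (by linarith) (by linarith))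

theorem setLIntegral_localSingularKernel_le (hσ : 0 < σ) {t : ℝ} (ht : 0 < t) (s : ℝ) :
    ∫⁻ u in Ioc t (2 * t), localSingularKernel σ u s ≤
      (Ioc (t / 2) (4 * t)).indicator (fun _ => ENNReal.ofReal (2 * ((4 * t) ^ σ / σ))) s := by
  by_cases hs : s ∈ Ioc (t / 2) (4 * t)
  · rw [indicator_of_mem hs]
    calc ∫⁻ u in Ioc t (2 * t), localSingularKernel σ u s
        ≤ ∫⁻ u in Ioc t (2 * t), ENNReal.ofReal (|u - s| ^ (σ - 1)) :=
          lintegral_mono fun u => indicator_le_self _ _ _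
      _ ≤ _ := setLIntegral_abs_sub_rpow_le hσ (by linarith)
          (Ioc_subset_Ioc (by linarith [hs.2]) (by linarith [hs.1]))
  · rw [indicator_of_notMem hs, nonpos_iff_eq_zero]
    refine setLIntegral_eq_zero measurableSet_Ioc fun u hu => indicator_of_notMem (fun hsu => ?_) _
    exact hs ⟨by linarith [hu.1, hsu.1], by linarith [hu.2, hsu.2]⟩

theorem inv_mul_sq_rpow_le {t s : ℝ} (hσ1 : σ ≤ 1) (ht : 0 < t) (hs : s ∈ Ioc (t / 2) (4 * t)) :
    t⁻¹ * (2 * ((4 * t) ^ σ / σ)) ^ 2 ≤ 128 / σ ^ 2 * s ^ (2 * σ - 1) := by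
  obtain ⟨hts, hst⟩ := hs
  have hs0 : 0 < s := by linarith
  have h_ratio : (4 * t / s) ^ (2 * σ - 1) ≤ 8 :=
    calc (4 * t / s) ^ (2 * σ - 1) ≤ 4 * t / s :=
          Real.rpow_le_self_of_one_le ((one_le_div hs0).2 hst) (by linarith)
      _ ≤ 8 := (div_le_iff₀ hs0).2 (by linarith)
  have h_sq : ((4 * t) ^ σ) ^ 2 = (4 * t / s) ^ (2 * σ - 1) * s ^ (2 * σ - 1) * (4 * t) := by
    rw [Real.div_rpow (by positivity) hs0.le, div_mul_cancel₀ _ (by positivity),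
      ← Real.rpow_add_one (by positivity), ← Real.rpow_natCast, ← Real.rpow_mul (by positivity)]
    ring_nf
  calc t⁻¹ * (2 * ((4 * t) ^ σ / σ)) ^ 2
      = 16 / σ ^ 2 * (4 * t / s) ^ (2 * σ - 1) * s ^ (2 * σ - 1) := by
        rw [mul_pow, div_pow, h_sq]; field_simp; ring
    _ ≤ 16 / σ ^ 2 * 8 * s ^ (2 * σ - 1) := by gcongr
    _ = 128 / σ ^ 2 * s ^ (2 * σ - 1) := by ring

theorem ofReal_inv_mul_setLIntegral_localSingularKernel_le (hσ : σ ∈ Ioo 0 1) {t : ℝ}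
    (ht : 0 < t) (s : ℝ) :
    ENNReal.ofReal t⁻¹ * ENNReal.ofReal (2 * ((4 * t) ^ σ / σ)) *
        ∫⁻ u in Ioc t (2 * t), localSingularKernel σ u s ≤
      ENNReal.ofReal (128 / σ ^ 2) *
        (Ioi 0).indicator (fun s => ENNReal.ofReal (s ^ (2 * σ - 1))) s := by
  have hσ0 := hσ.1
  grw [setLIntegral_localSingularKernel_le hσ0 ht s]
  by_cases hs : s ∈ Ioc (t / 2) (4 * t)
  · have hs0 : s ∈ Ioi 0 := mem_Ioi.2 (by linarith [hs.1])
    rw [indicator_of_mem hs, indicator_of_mem hs0, mul_assoc, ← sq,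
      ← ENNReal.ofReal_pow (by positivity), ← ENNReal.ofReal_mul (by positivity),
      ← ENNReal.ofReal_mul (by positivity)]
    exact ENNReal.ofReal_le_ofReal (inv_mul_sq_rpow_le hσ.2.le ht hs)
  · simp [indicator_of_notMem hs]

end

/-- Scalar Schur-type estimate for the local weakly singular integral: for 0 < σ < 1,
α = 2σ-1, there is C = C(σ) with
t⁻¹ ∫_t^{2t} (∫_{u/2}^{2u} g(s)|u-s|^{σ-1} ds)² du ≤ C ∫₀^∞ g(s)² s^α ds. -/
theorem stmt_5 (σ : ℝ) (hσ : σ ∈ Set.Ioo (0 : ℝ) 1) :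
    ∃ C > (0 : ℝ), ∀ g : ℝ → ℝ≥0∞, Measurable g → ∀ t > (0 : ℝ),
      ENNReal.ofReal t⁻¹ *
          ∫⁻ u in Set.Ioc t (2 * t),
            (∫⁻ s in Set.Ioc (u / 2) (2 * u),
                g s / ENNReal.ofReal (|u - s| ^ (1 - σ))) ^ 2
        ≤ ENNReal.ofReal C *
            ∫⁻ s in Set.Ioi (0 : ℝ), (g s) ^ 2 * ENNReal.ofReal (s ^ (2 * σ - 1)) := by
  refine ⟨128 / σ ^ 2, by have := hσ.1; positivity, fun g hg t ht => ?_⟩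
  set c := ENNReal.ofReal (2 * ((4 * t) ^ σ / σ))
  have h_schur : ∫⁻ u in Ioc t (2 * t), (∫⁻ s, g s * localSingularKernel σ u s) ^ 2 ≤
      c * ∫⁻ s, g s ^ 2 * ∫⁻ u in Ioc t (2 * t), localSingularKernel σ u s :=
    lintegral_sq_lintegral_mul_le (measurable_uncurry_localSingularKernel σ) hg
      (ae_restrict_of_forall_mem measurableSet_Ioc fun u hu =>
        lintegral_localSingularKernel_le hσ.1 hu)
  calc ENNReal.ofReal t⁻¹ * ∫⁻ u in Ioc t (2 * t),
        (∫⁻ s in Ioc (u / 2) (2 * u), g s / ENNReal.ofReal (|u - s| ^ (1 - σ))) ^ 2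
      = ENNReal.ofReal t⁻¹ *
          ∫⁻ u in Ioc t (2 * t), (∫⁻ s, g s * localSingularKernel σ u s) ^ 2 := by
        simp_rw [setLIntegral_div_eq_lintegral_mul_localSingularKernel]
    _ ≤ ∫⁻ s, g s ^ 2 *
          (ENNReal.ofReal t⁻¹ * c * ∫⁻ u in Ioc t (2 * t), localSingularKernel σ u s) := by
        grw [h_schur, ← mul_assoc, ← lintegral_const_mul' _ _ (by finiteness)]
        exact (lintegral_congr fun s => by ring).le
    _ ≤ ∫⁻ s, g s ^ 2 * (ENNReal.ofReal (128 / σ ^ 2) *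
          (Ioi 0).indicator (fun s => ENNReal.ofReal (s ^ (2 * σ - 1))) s) :=
        lintegral_mono fun s =>
          mul_le_mul_right (ofReal_inv_mul_setLIntegral_localSingularKernel_le hσ ht s) _
    _ = ENNReal.ofReal (128 / σ ^ 2) *
          ∫⁻ s in Ioi 0, g s ^ 2 * ENNReal.ofReal (s ^ (2 * σ - 1)) := by
        simp_rw [← lintegral_indicator measurableSet_Ioi, indicator_mul_right,
          mul_left_comm (g _ ^ 2)]
        exact lintegral_const_mul' _ _ ENNReal.ofReal_ne_top
end

section
/- Let u be a C² function on ℝ^{1+n}_+ solving div_{t,x}(A(t,x)∇_{t,x}u) = 0 with A = [[a,b],[c,d]] as block coefficients. Set f⊥ := a ∂_t u + b ∇_∥ u (the conormal derivative) and f∥ := ∇_∥ u. Then the pair f = (f⊥, f∥) satisfies the first-order system ∂_t f + D(Bf) = 0 together with curl_∥ f∥ = 0, where D = [[0, div_∥], [-∇_∥, 0]] and B = [[a^{-1}, -a^{-1}b],[ca^{-1}, d - ca^{-1}b]]. -/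
/-- Partial derivative ∂_t on the half space ℝ × ℝⁿ. -/
noncomputable def pdT {n : ℕ} {W : Type*} [NormedAddCommGroup W] [NormedSpace ℝ W]
    (F : ℝ × EuclideanSpace ℝ (Fin n) → W) (p : ℝ × EuclideanSpace ℝ (Fin n)) : W :=
  fderiv ℝ F p (1, 0)

/-- Tangential partial derivative ∂ᵢ on ℝ × ℝⁿ. -/
noncomputable def pdX {n : ℕ} (i : Fin n) {W : Type*} [NormedAddCommGroup W] [NormedSpace ℝ W]
    (F : ℝ × EuclideanSpace ℝ (Fin n) → W) (p : ℝ × EuclideanSpace ℝ (Fin n)) : W :=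
  fderiv ℝ F p (0, EuclideanSpace.single i 1)


lemma swap_deriv {E W : Type*} [NormedAddCommGroup E] [NormedSpace ℝ E]
    [NormedAddCommGroup W] [NormedSpace ℝ W] (F : E → W) (hF : ContDiff ℝ (⊤ : ℕ∞) F)
    (p v w : E) :
    fderiv ℝ (fun q => fderiv ℝ F q v) p w = fderiv ℝ (fun q => fderiv ℝ F q w) p v := by
  have h1 : ∀ y, HasFDerivAt F (fderiv ℝ F y) y :=
    fun y => (hF.differentiable (by simp) y).hasFDerivAt
  have h2 : HasFDerivAt (fderiv ℝ F) (fderiv ℝ (fderiv ℝ F) p) p :=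
    (((hF.fderiv_right (m := 1) (WithTop.coe_le_coe.mpr le_top)).differentiable one_ne_zero) p).hasFDerivAt
  have hsymm := second_derivative_symmetric h1 h2
  have e1 : HasFDerivAt (fun q => fderiv ℝ F q v)
      ((ContinuousLinearMap.apply ℝ W v).comp (fderiv ℝ (fderiv ℝ F) p)) p :=
    ((ContinuousLinearMap.apply ℝ W v).hasFDerivAt).comp p h2
  have e2 : HasFDerivAt (fun q => fderiv ℝ F q w)
      ((ContinuousLinearMap.apply ℝ W w).comp (fderiv ℝ (fderiv ℝ F) p)) p :=
    ((ContinuousLinearMap.apply ℝ W w).hasFDerivAt).comp p h2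
  rw [e1.fderiv, e2.fderiv]
  simpa using hsymm w v

/-- Equivalence of div_{t,x}(A∇_{t,x}u) = 0 with the first-order system
∂_t f + D(Bf) = 0, curl∥ f∥ = 0, for the conormal gradient f = (f⊥, f∥),
f⊥ = a ∂_t u + b ∇∥u, f∥ = ∇∥u, where B = [[a⁻¹, -a⁻¹b],[ca⁻¹, d - ca⁻¹b]]
(a⁻¹ given by the pointwise inverse ai). -/
theorem stmt_12 (n m : ℕ)
    (u : ℝ × EuclideanSpace ℝ (Fin n) → Fin m → ℂ)
    (a ai : ℝ × EuclideanSpace ℝ (Fin n) → (Fin m → ℂ) →L[ℂ] (Fin m → ℂ))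
    (b : ℝ × EuclideanSpace ℝ (Fin n) → (Fin n → Fin m → ℂ) →L[ℂ] (Fin m → ℂ))
    (c : ℝ × EuclideanSpace ℝ (Fin n) → (Fin m → ℂ) →L[ℂ] (Fin n → Fin m → ℂ))
    (d : ℝ × EuclideanSpace ℝ (Fin n) → (Fin n → Fin m → ℂ) →L[ℂ] (Fin n → Fin m → ℂ))
    (hu : ContDiff ℝ (⊤ : ℕ∞) u) (ha : ContDiff ℝ (⊤ : ℕ∞) a) (hb : ContDiff ℝ (⊤ : ℕ∞) b)
    (hc : ContDiff ℝ (⊤ : ℕ∞) c) (hd : ContDiff ℝ (⊤ : ℕ∞) d) (hai : ContDiff ℝ (⊤ : ℕ∞) ai)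
    (haiinv : ∀ p, (∀ w, ai p (a p w) = w) ∧ (∀ w, a p (ai p w) = w))
    -- the second order divergence form equation div_{t,x}(A ∇_{t,x} u) = 0:
    (heq : ∀ p, pdT (fun q => a q (pdT u q) + b q (fun i => pdX i u q)) p
        + ∑ i, pdX i (fun q => (c q (pdT u q) + d q (fun i' => pdX i' u q)) i) p = 0) :
    -- f⊥ := a ∂_t u + b ∇∥ u,  f∥ := ∇∥ u satisfy ∂_t f + D(Bf) = 0 and curl∥ f∥ = 0:
    (∀ p, pdT (fun q => a q (pdT u q) + b q (fun i => pdX i u q)) p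
        + ∑ i, pdX i (fun q =>
            (c q (ai q ((a q (pdT u q) + b q (fun i' => pdX i' u q))
                  - b q (fun i' => pdX i' u q)))
              + d q (fun i' => pdX i' u q)) i) p = 0) ∧
    (∀ p (i : Fin n), pdT (fun q => pdX i u q) p
        = pdX i (fun q => ai q ((a q (pdT u q) + b q (fun i' => pdX i' u q))
            - b q (fun i' => pdX i' u q))) p) ∧
    (∀ p (i j : Fin n), pdX i (fun q => pdX j u q) p = pdX j (fun q => pdX i u q) p) := by
  have key : ∀ q, ai q ((a q (pdT u q) + b q (fun i' => pdX i' u q))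
      - b q (fun i' => pdX i' u q)) = pdT u q := fun q => by
    rw [add_sub_cancel_right, (haiinv q).1]
  refine ⟨?_, ?_, ?_⟩
  · intro p
    simp only [key]
    exact heq p
  · intro p i
    simp only [key]
    exact swap_deriv u hu p _ _
  · intro p i j
    exact swap_deriv u hu p _ _
end
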